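/- Let X be a set and let τ₁ ⊆ τ₂ be topologies on X such that τ₁ is zero-dimensional (it has a base of τ₁-clopen sets) and every point of X has a τ₂-neighborhood that is compact in (X, τ₁). Then for every n ≥ 1, on F_n(X): the Vietoris topology V(τ₁) is coarser than the Vietoris topology V(τ₂), V(τ₁) is zero-dimensional, and every element of F_n(X) has a V(τ₂)-neighborhood that is compact with respect to V(τ₁). -/

import Mathlib

open Set Topology

noncomputable section

/-- The Vietoris topology on the powerset of `X` induced by a topology `τ`,
generated by the sets `{F | F ⊆ U}` and `{F | F ∩ U ≠ ∅}` for `U` a nonempty `τ`-open set. -/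
def VietorisTop {X : Type*} (τ : TopologicalSpace X) : TopologicalSpace (Set X) :=
  TopologicalSpace.generateFrom
    ({S : Set (Set X) | ∃ U : Set X, IsOpen[τ] U ∧ U.Nonempty ∧ S = {F : Set X | F ⊆ U}} ∪
     {S : Set (Set X) | ∃ U : Set X, IsOpen[τ] U ∧ U.Nonempty ∧ S = {F : Set X | (F ∩ U).Nonempty}})

/-- The underlying set of the `n`-th symmetric product: nonempty subsets of `X`
with at most `n` points. -/
def FnSub (n : ℕ) (X : Type*) : Type _ :=
  {F : Set X // F.Nonempty ∧ F.Finite ∧ F.ncard ≤ n}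

/-- The Vietoris topology on `F_n(X)` induced by a topology `τ` on `X`. -/
def VietFn (n : ℕ) {X : Type*} (τ : TopologicalSpace X) : TopologicalSpace (FnSub n X) :=
  (VietorisTop τ).induced Subtype.val

/-- A topology is zero-dimensional if it has a base of clopen sets. -/
def IsZeroDimTop {X : Type*} (τ : TopologicalSpace X) : Prop :=
  ∀ U : Set X, IsOpen[τ] U → ∀ x ∈ U, ∃ V : Set X, IsOpen[τ] V ∧ IsClosed[τ] V ∧ x ∈ V ∧ V ⊆ U

/-!
On nonempty sets the Vietoris topology `VietorisTop τ` agrees with Mathlib's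
`TopologicalSpace.vietoris`, so `V(τ)` on `F_n(X)` is a subspace of the latter; coarseness of
`V(τ₁)` is monotonicity of the construction. In a zero-dimensional space a finite set inside an
open `U` lies in a clopen `W ⊆ U`, so every subbasic set `{G | G ⊆ U}` or `{G | G ∩ U ≠ ∅}`
around a point of `F_n(X)` contains a clopen one of the same shape, and finite intersections of
these form a clopen base. For `F ∈ F_n(X)`, cover `F` by finitely many `τ₂`-neighbourhoods that
are `τ₁`-compact, with union `K`: then `{G | G ⊆ K}` is a `V(τ₂)`-neighbourhood of `F`, and it is
the image of the compact `Kⁿ` under the continuous map `x ↦ range x`.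
-/

open TopologicalSpace

attribute [local instance] TopologicalSpace.vietoris

section

variable {X : Type*}

theorem isZeroDimTop_of_subbasis {t : TopologicalSpace X} {s : Set (Set X)}
    (hs : t = generateFrom s)
    (h : ∀ S ∈ s, ∀ x ∈ S, ∃ V, IsOpen[t] V ∧ IsClosed[t] V ∧ x ∈ V ∧ V ⊆ S) :
    IsZeroDimTop t := by
  intro U hU x hxU
  obtain ⟨_, ⟨f, ⟨hf, hfs⟩, rfl⟩, hxf, hfU⟩ :=
    (isTopologicalBasis_of_subbasis hs).exists_subset_of_mem_open hxU hU
  choose V hVo hVc hxV hVS using fun S : f => h S (hfs S.2) x (mem_sInter.1 hxf S S.2)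
  have := hf.to_subtype
  exact ⟨⋂ S, V S, isOpen_iInter_of_finite hVo, isClosed_iInter hVc, mem_iInter.2 hxV,
    fun y hy => hfU fun S hS => hVS ⟨S, hS⟩ (mem_iInter.1 hy _)⟩

theorem IsZeroDimTop.exists_clopen_between {τ : TopologicalSpace X} (hzd : IsZeroDimTop τ)
    {U F : Set X} (hU : IsOpen[τ] U) (hF : F.Finite) (hFU : F ⊆ U) :
    ∃ W, IsOpen[τ] W ∧ IsClosed[τ] W ∧ F ⊆ W ∧ W ⊆ U := by
  let := τ
  choose V hVo hVc hxV hVU using fun x : F => hzd U hU x (hFU x.2)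
  have := hF.to_subtype
  exact ⟨⋃ x, V x, isOpen_iUnion hVo, isClosed_iUnion_of_finite hVc,
    fun x hx => mem_iUnion.2 ⟨⟨x, hx⟩, hxV _⟩, iUnion_subset hVU⟩

theorem Set.Finite.exists_fin_range_eq {n : ℕ} {s : Set X} (hfin : s.Finite) (hne : s.Nonempty)
    (hcard : s.ncard ≤ n) : ∃ x : Fin n → X, range x = s := by
  have := hfin.fintype
  have := hne.to_subtype
  obtain ⟨e⟩ : Nonempty (s ↪ Fin n) := Function.Embedding.nonempty_of_card_le <| by
    rwa [Fintype.card_fin, ← Nat.card_eq_fintype_card, Nat.card_coe_set_eq]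
  refine ⟨(↑) ∘ Function.invFun e, ?_⟩
  rw [range_comp, (Function.invFun_surjective e.injective).range_eq, image_univ, Subtype.range_coe]

theorem vietorisTop_mono : Monotone (VietorisTop (X := X)) := fun _ _ h =>
  generateFrom_anti <| union_subset_union
    (fun _ ⟨U, hU, hne, hS⟩ => ⟨U, TopologicalSpace.le_def.1 h U hU, hne, hS⟩)
    (fun _ ⟨U, hU, hne, hS⟩ => ⟨U, TopologicalSpace.le_def.1 h U hU, hne, hS⟩)

theorem vietFn_mono (n : ℕ) : Monotone (VietFn n (X := X)) := fun _ _ h =>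
  induced_mono (vietorisTop_mono h)

theorem vietFn_eq_induced_vietoris (n : ℕ) (τ : TopologicalSpace X) :
    VietFn n τ = (@TopologicalSpace.vietoris X τ).induced Subtype.val := by
  let := τ
  refine le_antisymm ?_ (induced_mono <| generateFrom_anti <| union_subset_union
    (fun _ ⟨U, hU, _, hS⟩ => ⟨U, hU, hS.symm⟩) (fun _ ⟨U, hU, _, hS⟩ => ⟨U, hU, hS.symm⟩))
  rw [TopologicalSpace.vietoris, induced_generateFrom_eq]
  refine le_generateFrom ?_
  -- the two topologies differ only by the sets `{∅}` and `∅`, which contain no point of `F_n(X)`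
  rintro _ ⟨_, ⟨U, hU, rfl⟩ | ⟨U, hU, rfl⟩, rfl⟩ <;> rcases U.eq_empty_or_nonempty with rfl | hne
  · have : Subtype.val ⁻¹' 𝒫 (∅ : Set X) = (∅ : Set (FnSub n X)) :=
      eq_empty_of_forall_notMem fun G hG => G.2.1.ne_empty (subset_empty_iff.1 hG)
    exact this ▸ @isOpen_empty _ (VietFn n τ)
  · exact ⟨_, isOpen_generateFrom_of_mem (.inl ⟨U, hU, hne, rfl⟩), rfl⟩
  · simp only [inter_empty, Set.not_nonempty_empty, ofPred_false, preimage_empty]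
    exact @isOpen_empty _ (VietFn n τ)
  · exact ⟨_, isOpen_generateFrom_of_mem (.inr ⟨U, hU, hne, rfl⟩), rfl⟩

namespace FnSub

variable {n : ℕ}

theorem one_le (G : FnSub n X) : 1 ≤ n :=
  ((ncard_pos G.2.2.1).2 G.2.1).trans_le G.2.2.2

def ofFun [NeZero n] (x : Fin n → X) : FnSub n X :=
  ⟨range x, range_nonempty x, finite_range x, by
    simpa [Nat.card_coe_set_eq] using Finite.card_range_le x⟩

theorem continuous_ofFun [NeZero n] (τ : TopologicalSpace X) :
    Continuous[Pi.topologicalSpace (t₂ := fun _ => τ), VietFn n τ] (ofFun (n := n)) := by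
  let := τ
  rw [vietFn_eq_induced_vietoris]
  exact continuous_induced_rng.2 vietoris.continuous_range_of_finite

theorem image_ofFun_pi [NeZero n] (K : Set X) :
    ofFun '' univ.pi (fun _ : Fin n => K) = {G : FnSub n X | G.1 ⊆ K} := by
  refine Subset.antisymm ?_ fun G hG => ?_
  · rintro _ ⟨x, hx, rfl⟩ _ ⟨i, rfl⟩
    exact hx i (mem_univ i)
  · obtain ⟨x, hx⟩ := Set.Finite.exists_fin_range_eq G.2.2.1 G.2.1 G.2.2.2
    exact ⟨x, fun i _ => hG (hx ▸ mem_range_self i), Subtype.ext hx⟩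

end FnSub

namespace VietFn

variable {n : ℕ} {τ : TopologicalSpace X} {U : Set X}

theorem isOpen_setOf_subset (hU : IsOpen[τ] U) :
    IsOpen[VietFn n τ] {G : FnSub n X | G.1 ⊆ U} := by
  let := τ
  rw [vietFn_eq_induced_vietoris]
  exact isOpen_induced hU.powerset_vietoris

theorem isClosed_setOf_subset (hU : IsClosed[τ] U) :
    IsClosed[VietFn n τ] {G : FnSub n X | G.1 ⊆ U} := by
  let := τ
  rw [vietFn_eq_induced_vietoris]
  exact isClosed_induced hU.powerset_vietoris

theorem isOpen_setOf_inter_nonempty (hU : IsOpen[τ] U) :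
    IsOpen[VietFn n τ] {G : FnSub n X | (G.1 ∩ U).Nonempty} := by
  let := τ
  rw [vietFn_eq_induced_vietoris]
  exact isOpen_induced (vietoris.isOpen_inter_nonempty_of_isOpen hU)

theorem isClosed_setOf_inter_nonempty (hU : IsClosed[τ] U) :
    IsClosed[VietFn n τ] {G : FnSub n X | (G.1 ∩ U).Nonempty} := by
  let := τ
  rw [vietFn_eq_induced_vietoris]
  exact isClosed_induced (vietoris.isClosed_inter_nonempty_of_isClosed hU)

theorem isCompact_setOf_subset {K : Set X} (hK : @IsCompact X τ K) :
    @IsCompact _ (VietFn n τ) {G : FnSub n X | G.1 ⊆ K} := by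
  let := τ
  let := VietFn n τ
  rcases isEmpty_or_nonempty (FnSub n X) with _ | hne
  · exact Set.Subsingleton.isCompact fun G => isEmptyElim G
  have : NeZero n := ⟨Nat.one_le_iff_ne_zero.1 hne.some.one_le⟩
  rw [← FnSub.image_ofFun_pi]
  exact (isCompact_univ_pi fun _ => hK).image (FnSub.continuous_ofFun τ)

theorem setOf_subset_mem_nhds {K : Set X} {F : FnSub n X} (hK : K ∈ @nhdsSet X τ F.1) :
    {G : FnSub n X | G.1 ⊆ K} ∈ @nhds _ (VietFn n τ) F := by
  let := τ
  let := VietFn n τ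
  obtain ⟨U, hU, hFU, hUK⟩ := mem_nhdsSet_iff_exists.1 hK
  exact Filter.mem_of_superset ((isOpen_setOf_subset hU).mem_nhds hFU) fun G hG => hG.trans hUK

end VietFn

theorem isZeroDimTop_vietFn (n : ℕ) {τ : TopologicalSpace X} (hzd : IsZeroDimTop τ) :
    IsZeroDimTop (VietFn n τ) := by
  let := τ
  refine isZeroDimTop_of_subbasis
    (by rw [vietFn_eq_induced_vietoris, TopologicalSpace.vietoris, induced_generateFrom_eq]; rfl) ?_
  rintro _ ⟨_, ⟨U, hU, rfl⟩ | ⟨U, hU, rfl⟩, rfl⟩ G hG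
  · obtain ⟨W, hWo, hWc, hGW, hWU⟩ := hzd.exists_clopen_between hU G.2.2.1 hG
    exact ⟨_, VietFn.isOpen_setOf_subset hWo, VietFn.isClosed_setOf_subset hWc, hGW,
      fun H hH => hH.trans hWU⟩
  · obtain ⟨x, hxG, hxU⟩ := hG
    obtain ⟨W, hWo, hWc, hxW, hWU⟩ := hzd U hU x hxU
    exact ⟨_, VietFn.isOpen_setOf_inter_nonempty hWo, VietFn.isClosed_setOf_inter_nonempty hWc,
      ⟨x, hxG, hxW⟩, fun H ⟨y, hyH, hyW⟩ => ⟨y, hyH, hWU hyW⟩⟩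

end

theorem property_C1_hypFn_general {X : Type*} (τ₁ τ₂ : TopologicalSpace X)
    (hle : ∀ U : Set X, IsOpen[τ₁] U → IsOpen[τ₂] U)
    (hzd : IsZeroDimTop τ₁)
    (hcpt : ∀ x : X, ∃ N : Set X, N ∈ @nhds X τ₂ x ∧ @IsCompact X τ₁ N)
    (n : ℕ) :
    (∀ S : Set (FnSub n X), IsOpen[VietFn n τ₁] S → IsOpen[VietFn n τ₂] S) ∧
    IsZeroDimTop (VietFn n τ₁) ∧
    (∀ F : FnSub n X, ∃ N : Set (FnSub n X),
      N ∈ @nhds (FnSub n X) (VietFn n τ₂) F ∧ @IsCompact (FnSub n X) (VietFn n τ₁) N) := by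
  refine ⟨fun S => vietFn_mono n (TopologicalSpace.le_def.2 hle) S, isZeroDimTop_vietFn n hzd,
    fun F => ?_⟩
  choose N hN hNc using hcpt
  have := F.2.2.1.to_subtype
  have hK : @IsCompact X τ₁ (⋃ x : F.1, N x) := by
    let := τ₁
    exact isCompact_iUnion fun x => hNc x
  have hK_nhds : (⋃ x : F.1, N x) ∈ @nhdsSet X τ₂ F.1 := by
    let := τ₂
    exact mem_nhdsSet_iff_forall.2 fun x hx =>
      Filter.mem_of_superset (hN x) (subset_iUnion_of_subset ⟨x, hx⟩ Subset.rfl)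
  exact ⟨_, VietFn.setOf_subset_mem_nhds hK_nhds, VietFn.isCompact_setOf_subset hK⟩

/-- Property `C₁` passes to symmetric products: if `τ₁ ⊆ τ₂`, `τ₁` is zero-dimensional, and
every point has a `τ₂`-neighborhood that is `τ₁`-compact, then on `F_n(X)` (for `n ≥ 1`)
the Vietoris topology of `τ₁` is coarser than that of `τ₂`, is zero-dimensional, and every
element has a `V(τ₂)`-neighborhood that is `V(τ₁)`-compact. -/
theorem property_C1_hypFn {X : Type*} (τ₁ τ₂ : TopologicalSpace X)
    (hle : ∀ U : Set X, IsOpen[τ₁] U → IsOpen[τ₂] U)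
    (hzd : IsZeroDimTop τ₁)
    (hcpt : ∀ x : X, ∃ N : Set X, N ∈ @nhds X τ₂ x ∧ @IsCompact X τ₁ N)
    (n : ℕ) (hn : 1 ≤ n) :
    (∀ S : Set (FnSub n X), IsOpen[VietFn n τ₁] S → IsOpen[VietFn n τ₂] S) ∧
    IsZeroDimTop (VietFn n τ₁) ∧
    (∀ F : FnSub n X, ∃ N : Set (FnSub n X),
      N ∈ @nhds (FnSub n X) (VietFn n τ₂) F ∧ @IsCompact (FnSub n X) (VietFn n τ₁) N) :=
  property_C1_hypFn_general τ₁ τ₂ hle hzd hcpt n
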